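/- arXiv:2601.10881 — 3 statements merged into one kernel-verified Lean document; each statement's English description precedes it below -/
import Mathlib

section
/- Let G be a K-edge-connected finite simple graph, let Z ⊆ V(G) be such that ∂Z is a K-cut, and let Z_1, ..., Z_t be pairwise disjoint nonempty sets with Z = Z_1 ∪ ... ∪ Z_t, such that each ∂Z_i is a K-cut and such that every K-cut of G having a shore X with X ⊊ Z satisfies X ⊆ Z_i for some i. Then H̃(Z) = H̄ ∪ (N(H̄ ∩ Z) ∖ Z), where H̄ = V(∂Z) ∩ H̃(Z_1) ∩ ... ∩ H̃(Z_t), and N(S) denotes the set of vertices adjacent in G to some vertex of S. -/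
open SimpleGraph

variable {V : Type*}

/-- The cut `∂X`: the set of edges of `G` with exactly one endpoint in `X`. -/
def cutEdges (G : SimpleGraph V) (X : Set V) : Set (Sym2 V) :=
  {e | e ∈ G.edgeSet ∧ ∃ u v, e = s(u, v) ∧ u ∈ X ∧ v ∉ X}

/-- `G` is `K`-edge-connected: at least two vertices, connected, and every cut has
at least `K` edges. -/
def KEdgeConnected (G : SimpleGraph V) (K : ℕ) : Prop :=
  Nontrivial V ∧ G.Connected ∧
    ∀ X : Set V, X.Nonempty → X ≠ Set.univ → K ≤ (cutEdges G X).ncard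

/-- `∂X` is a `K`-cut. -/
def IsKCut (G : SimpleGraph V) (K : ℕ) (X : Set V) : Prop :=
  X.Nonempty ∧ X ≠ Set.univ ∧ (cutEdges G X).ncard = K

/-- The cuts `∂X` and `∂Y` cross. -/
def Crossing (X Y : Set V) : Prop :=
  (X ∩ Y).Nonempty ∧ (X ∩ Yᶜ).Nonempty ∧ (Xᶜ ∩ Y).Nonempty ∧ (Xᶜ ∩ Yᶜ).Nonempty

/-- The set of vertices reachable from `u` in `T` after deleting the edge `e`;
for a spanning tree `T` and an edge `e` of `T` with endpoint `u`, this is the shore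
of the cut induced by `e` containing `u`. -/
def treeSide (T : SimpleGraph V) (u : V) (e : Sym2 V) : Set V :=
  {x | (T.deleteEdges {e}).Reachable u x}

/-- The congestion of the edge `(u,v)` of a spanning tree `T` of `G`. -/
noncomputable def edgeCong (G T : SimpleGraph V) (u v : V) : ℕ :=
  (cutEdges G (treeSide T u s(u, v))).ncard

/-- The spanning tree `T` of `G` has congestion at most `K`. -/
def CongAtMost (G T : SimpleGraph V) (K : ℕ) : Prop :=
  ∀ u v, T.Adj u v → edgeCong G T u v ≤ K

/-- The congestion of a spanning tree `T` of `G`. -/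
noncomputable def treeCongestion (G T : SimpleGraph V) : ℕ :=
  sSup {n | ∃ u v, T.Adj u v ∧ n = edgeCong G T u v}

/-- The spanning-tree congestion of `G`. -/
noncomputable def stc (G : SimpleGraph V) : ℕ :=
  sInf {n | ∃ T : SimpleGraph V, T ≤ G ∧ T.IsTree ∧ treeCongestion G T = n}

/-- `T_out(w,e)`: the vertex set of the component of the tree `H − e` not containing `w`
(the vertices of `H` that are no longer reachable from `w` after deleting `e`). -/
def treeOut (G : SimpleGraph V) (H : G.Subgraph) (w : V) (e : Sym2 V) : Set V :=
  {x ∈ H.verts | ¬ (H.deleteEdges {e}).spanningCoe.Reachable w x}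

/-- The rooted tree `(H, w)` is safe (with parameter `K`). -/
def SafeTree (G : SimpleGraph V) (K : ℕ) (H : G.Subgraph) (w : V) : Prop :=
  ∀ e ∈ H.edgeSet, (cutEdges G (treeOut G H w e)).ncard = K

/-- `V(∂X)`: the set of endpoints of edges of the cut `∂X`. -/
def cutVerts (G : SimpleGraph V) (X : Set V) : Set V :=
  {v | ∃ e ∈ cutEdges G X, v ∈ e}

/-- `w` is a hub for `Z`: `w ∈ V(∂Z)` and there is a spanning tree `H` of the subgraph
of `G` induced by `Z ∪ {w}` such that `(H, w)` is a safe tree. -/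
def IsHub (G : SimpleGraph V) (K : ℕ) (Z : Set V) (w : V) : Prop :=
  w ∈ cutVerts G Z ∧
    ∃ H : G.Subgraph, H.verts = Z ∪ {w} ∧ H.coe.IsTree ∧ SafeTree G K H w

/-- `H̃(Z)`: the set of all hubs for `Z`. -/
def hubSet (G : SimpleGraph V) (K : ℕ) (Z : Set V) : Set V :=
  {w | IsHub G K Z w}

/-- `N(S)`: the set of vertices adjacent in `G` to some vertex of `S`. -/
def nbrSet (G : SimpleGraph V) (S : Set V) : Set V :=
  {v | ∃ u ∈ S, G.Adj u v}

/-- Edges of `∂X` with both endpoints in `S`. -/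
def cutRestrict (G : SimpleGraph V) (X S : Set V) : Set (Sym2 V) :=
  {e ∈ cutEdges G X | ∀ v ∈ e, v ∈ S}

/-!
A hub tree for `Z` rooted at `w` either has a subtree equal to `Z`, and then `w` is a leaf
hanging from some `b ∈ Z`, or all its subtrees are proper subsets of `Z`. Rerooting at `b` in the
first case, every subtree meeting `Z` is a `K`-cut shore properly inside `Z`, so by laminarity it
lies in a single part `Zs i`. Restricting the tree to `Zs i` plus the root therefore leaves a tree
with the same subtrees, and the root is a hub of every part.

Conversely, hub trees of all parts rooted at a common vertex `w` meet only in `w`, so their union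
is a hub tree for `Z`; and a hub tree for `Z` rooted at `u ∈ Z` extends by a pendant edge `uw` to
one rooted at `w`, the new edge cutting off exactly `Z`.
-/

namespace SimpleGraph

variable {A B S : SimpleGraph V} {a b u x : V}

theorem Reachable.deleteEdges_or (h : S.Reachable x a) (b : V) :
    (S.deleteEdges {s(a, b)}).Reachable x a ∨ (S.deleteEdges {s(a, b)}).Reachable x b := by
  suffices ∀ {y z : V}, S.Walk y z → z = a →
      (S.deleteEdges {s(a, b)}).Reachable y a ∨ (S.deleteEdges {s(a, b)}).Reachable y b from
    this h.some rfl
  intro y z p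
  induction p with
  | nil => rintro rfl; exact Or.inl .rfl
  | @cons y y' _ hyy' _ ih =>
    intro hz
    by_cases he : s(y, y') = s(a, b)
    · rcases Sym2.eq_iff.mp he with ⟨rfl, -⟩ | ⟨rfl, -⟩
      · exact Or.inl .rfl
      · exact Or.inr .rfl
    · have hyy'' : (S.deleteEdges {s(a, b)}).Adj y y' := by simpa [he] using hyy'
      exact (ih hz).imp hyy''.reachable.trans hyy''.reachable.trans

/-- If the only contact of a vertex set `s` with the rest of `B` is the vertex `w`, and `A`
is the part of `B` inside `s`, then `B`-reachability inside `s` is `A`-reachability. -/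
theorem Reachable.of_attachedAt {s : Set V} {w : V} (hA : ∀ a b, A.Adj a b → a ∈ s)
    (hB : ∀ a b, B.Adj a b → a ∈ s → a ≠ w → A.Adj a b)
    (h : B.Reachable u x) (hu : u ∈ s) (hx : x ∈ s) : A.Reachable u x := by
  obtain ⟨p⟩ := h
  -- once the walk has left `s`, it can only come back through `w`
  refine (?_ : (u ∈ s → A.Reachable u x) ∧ (u ∉ s → A.Reachable w x)).1 hu
  clear hu
  induction p with
  | nil => exact ⟨fun _ => .rfl, fun h => absurd hx h⟩
  | @cons u y _ huy _ ih =>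
    specialize ih hx
    constructor
    · intro hu
      rcases eq_or_ne u w with rfl | huw
      · by_cases hy : y ∈ s
        · exact (hB y u huy.symm hy huy.ne.symm).symm.reachable.trans (ih.1 hy)
        · exact ih.2 hy
      · have hA' := hB u y huy hu huw
        exact hA'.reachable.trans (ih.1 (hA y u hA'.symm))
    · intro hu
      by_cases hy : y ∈ s
      · rcases eq_or_ne y w with rfl | hyw
        · exact ih.1 hy
        · exact absurd (hA u y (hB y u huy.symm hy hyw).symm) hu
      · exact ih.2 hy

theorem Walk.reachable_of_support_subset {s : Set V}
    (hAB : ∀ a ∈ s, ∀ b ∈ s, B.Adj a b → A.Adj a b) (p : B.Walk u x)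
    (hp : ∀ v ∈ p.support, v ∈ s) : A.Reachable u x := by
  induction p with
  | nil => exact .rfl
  | cons h q ih =>
    simp only [Walk.support_cons, List.mem_cons, forall_eq_or_imp] at hp
    exact (hAB _ hp.1 _ (hp.2 _ q.start_mem_support) h).reachable.trans (ih hp.2)

theorem IsAcyclic.not_reachable_deleteEdges (h : S.IsAcyclic) (hab : S.Adj a b) :
    ¬ (S.deleteEdges {s(a, b)}).Reachable a b :=
  isBridge_iff.mp (isAcyclic_iff_forall_adj_isBridge.mp h hab)

namespace Subgraph

variable {G : SimpleGraph V} {H : G.Subgraph}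

theorem mem_verts_of_mem_support (p : H.spanningCoe.Walk u x) (hu : u ∈ H.verts)
    {v : V} (hv : v ∈ p.support) : v ∈ H.verts := by
  induction p with
  | nil => exact (List.mem_singleton.mp hv) ▸ hu
  | cons h _ ih =>
    rcases List.mem_cons.mp hv with rfl | hv
    · exact hu
    · exact ih (Subgraph.Adj.snd_mem h) hv

theorem induce_le {s : Set V} (hs : s ⊆ H.verts) : H.induce s ≤ H := ⟨hs, fun _ _ h => h.2.2⟩

theorem disjoint_edgeSet_of_inter_subset_singleton {H' : G.Subgraph} {w : V}
    (h : H.verts ∩ H'.verts ⊆ {w}) : Disjoint H.edgeSet H'.edgeSet := by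
  refine Set.disjoint_left.mpr fun e he he' => ?_
  induction e using Sym2.ind with | _ a b => ?_
  rw [Subgraph.mem_edgeSet] at he he'
  exact he.ne ((h ⟨he.fst_mem, he'.fst_mem⟩).trans (h ⟨he.snd_mem, he'.snd_mem⟩).symm)

theorem reachable_coe_iff {u v : H.verts} :
    H.coe.Reachable u v ↔ H.spanningCoe.Reachable u v := by
  refine ⟨fun h => h.map (Embedding.induce (G := H.spanningCoe) H.verts).toHom, ?_⟩
  rintro ⟨p⟩
  exact (p.induce H.verts fun _ => mem_verts_of_mem_support p u.2).reachable

theorem connected_coe_iff : H.coe.Connected ↔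
    H.verts.Nonempty ∧ ∀ u ∈ H.verts, ∀ v ∈ H.verts, H.spanningCoe.Reachable u v := by
  rw [connected_iff, Set.nonempty_coe_sort, and_comm]
  exact and_congr_right fun _ =>
    ⟨fun h u hu v hv => reachable_coe_iff.mp (h ⟨u, hu⟩ ⟨v, hv⟩),
      fun h u v => reachable_coe_iff.mpr (h u u.2 v v.2)⟩

theorem isAcyclic_spanningCoe_iff : H.spanningCoe.IsAcyclic ↔ H.coe.IsAcyclic := by
  refine ⟨fun h => h.induce H.verts, fun h v c hc => ?_⟩
  have hv : v ∈ H.verts := Subgraph.Adj.fst_mem (c.adj_snd hc.not_nil)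
  have hsupp : ∀ x ∈ c.support, x ∈ H.verts := fun _ => mem_verts_of_mem_support c hv
  have h' : (H.spanningCoe.induce H.verts).IsAcyclic := h
  refine h' (c.induce H.verts hsupp) ?_
  rw [← Walk.isCycle_map_iff_of_injective
    (f := (Embedding.induce (G := H.spanningCoe) H.verts).toHom) Subtype.val_injective]
  simpa using hc

end Subgraph

end SimpleGraph

section TreeOut

open Subgraph

variable {G : SimpleGraph V} {H : G.Subgraph} {r a b c x : V} {e : Sym2 V}

theorem mem_treeOut :
    x ∈ treeOut G H r e ↔ x ∈ H.verts ∧ ¬ (H.spanningCoe.deleteEdges {e}).Reachable r x := by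
  rw [deleteEdges_spanningCoe_eq]
  rfl

theorem root_not_mem_treeOut : r ∉ treeOut G H r e := fun h => h.2 .rfl

theorem treeOut_subset_diff : treeOut G H r e ⊆ H.verts \ {r} :=
  fun _ hx => ⟨hx.1, by rintro rfl; exact root_not_mem_treeOut hx⟩

theorem treeOut_subset_of_verts_eq {Z : Set V} (hHv : H.verts = Z ∪ {r}) :
    treeOut G H r e ⊆ Z := by
  intro x hx
  have hx' := treeOut_subset_diff hx
  rw [hHv, Set.union_sdiff_right] at hx'
  exact hx'.1

theorem treeOut_eq_of_reachable {r' : V} (h : (H.spanningCoe.deleteEdges {e}).Reachable r r') :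
    treeOut G H r' e = treeOut G H r e := by
  ext x
  simp only [mem_treeOut]
  exact and_congr_right fun _ => not_congr ⟨h.trans, h.symm.trans⟩

theorem treeOut_eq_diff_of_forall_not_adj (h : ∀ y, ¬ (H.spanningCoe.deleteEdges {e}).Adj r y) :
    treeOut G H r e = H.verts \ {r} := by
  ext x
  simp only [mem_treeOut, Set.mem_sdiff, Set.mem_singleton_iff]
  refine and_congr_right fun _ => not_congr ⟨fun ⟨p⟩ => ?_, by rintro rfl; rfl⟩
  cases p with
  | nil => rfl
  | cons hadj _ => exact absurd hadj (h _)

theorem not_mem_treeOut_or (hH : H.coe.Connected) (hr : r ∈ H.verts) (hab : H.Adj a b) :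
    a ∉ treeOut G H r s(a, b) ∨ b ∉ treeOut G H r s(a, b) :=
  (((connected_coe_iff.mp hH).2 r hr a hab.fst_mem).deleteEdges_or b).imp
    (fun h h' => (mem_treeOut.mp h').2 h) (fun h h' => (mem_treeOut.mp h').2 h)

theorem mem_treeOut_of_not_mem (hH : H.spanningCoe.IsAcyclic) (hab : H.Adj a b)
    (ha : a ∉ treeOut G H r s(a, b)) : b ∈ treeOut G H r s(a, b) := by
  have hra : (H.spanningCoe.deleteEdges {s(a, b)}).Reachable r a := by
    by_contra h
    exact ha (mem_treeOut.mpr ⟨hab.fst_mem, h⟩)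
  exact mem_treeOut.mpr
    ⟨hab.snd_mem, fun hrb => hH.not_reachable_deleteEdges hab (hra.symm.trans hrb)⟩

theorem exists_mem_treeOut (hH : H.coe.IsTree) (hr : r ∈ H.verts) (he : e ∈ H.edgeSet) :
    ∃ f ∈ e, f ∈ treeOut G H r e := by
  induction e using Sym2.ind with | _ a b => ?_
  have hab : H.Adj a b := he
  have hac := isAcyclic_spanningCoe_iff.mpr hH.isAcyclic
  rcases not_mem_treeOut_or hH.connected hr hab with ha | hb
  · exact ⟨b, Sym2.mem_mk_right a b, mem_treeOut_of_not_mem hac hab ha⟩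
  · rw [Sym2.eq_swap] at hb ⊢
    exact ⟨a, Sym2.mem_mk_right b a, mem_treeOut_of_not_mem hac hab.symm hb⟩

theorem support_subset_treeOut (hH : H.spanningCoe.IsAcyclic) (hrc : H.Adj r c)
    (q : H.spanningCoe.Walk c x) (hq : r ∉ q.support) :
    ∀ v ∈ q.support, v ∈ treeOut G H r s(r, c) := by
  classical
  intro v hv
  have hq' : s(r, c) ∉ q.edges := fun h => hq (q.fst_mem_support_of_mem_edges h)
  refine mem_treeOut.mpr ⟨mem_verts_of_mem_support q hrc.snd_mem hv, fun hrv => ?_⟩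
  have hcv : (H.spanningCoe.deleteEdges {s(r, c)}).Reachable c v :=
    ((q.toDeleteEdge _ hq').takeUntil v (by simpa using hv)).reachable
  exact hH.not_reachable_deleteEdges hrc (hrv.trans hcv.symm)

end TreeOut

section Restriction

open Subgraph

variable {G : SimpleGraph V} {H : G.Subgraph} {r x : V} {e : Sym2 V} {P : Set V}

/-- The whole path beyond its first edge lies in one subtree. -/
theorem support_subset_of_isPath (hH : H.spanningCoe.IsAcyclic)
    (hP : ∀ e ∈ H.edgeSet, treeOut G H r e ⊆ P ∨ Disjoint (treeOut G H r e) P)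
    (p : H.spanningCoe.Walk r x) (hp : p.IsPath) (hx : x ∈ P) : ∀ v ∈ p.support, v ∈ P ∪ {r} := by
  cases p with
  | nil =>
    intro v hv
    exact Or.inr (List.mem_singleton.mp hv)
  | cons hrc q =>
    rw [Walk.cons_isPath_iff] at hp
    have hq := support_subset_treeOut hH hrc q hp.2
    have hTP : treeOut G H r s(r, _) ⊆ P :=
      (hP _ hrc).resolve_right fun hd => hd.ne_of_mem (hq x q.end_mem_support) hx rfl
    intro v hv
    rcases List.mem_cons.mp hv with rfl | hv
    · exact Or.inr rfl
    · exact Or.inl (hTP (hq v hv))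

variable (hH : H.coe.IsTree) (hr : r ∈ H.verts) (hPH : P ⊆ H.verts)
  (hP : ∀ e ∈ H.edgeSet, treeOut G H r e ⊆ P ∨ Disjoint (treeOut G H r e) P)
include hH hr hPH hP

theorem isTree_induce : (H.induce (P ∪ {r})).coe.IsTree := by
  have hac := isAcyclic_spanningCoe_iff.mpr hH.isAcyclic
  refine ⟨connected_coe_iff.mpr ⟨⟨r, Or.inr rfl⟩, ?_⟩, ?_⟩
  · suffices ∀ x ∈ P ∪ {r}, (H.induce (P ∪ {r})).spanningCoe.Reachable r x from
      fun u hu v hv => (this u hu).symm.trans (this v hv)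
    rintro x (hx | rfl)
    · obtain ⟨p, hp⟩ := ((connected_coe_iff.mp hH.connected).2 r hr x (hPH hx)).exists_isPath
      exact p.reachable_of_support_subset (fun a ha b hb h => ⟨ha, hb, h⟩)
        (support_subset_of_isPath hac hP p hp hx)
    · exact .rfl
  · have hle := induce_le (Set.union_subset hPH (Set.singleton_subset_iff.mpr hr))
    exact isAcyclic_spanningCoe_iff.mp (hac.anti (spanningCoe_le_of_le hle))

theorem treeOut_induce (he : e ∈ (H.induce (P ∪ {r})).edgeSet) :
    treeOut G (H.induce (P ∪ {r})) r e = treeOut G H r e := by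
  have hac := isAcyclic_spanningCoe_iff.mpr hH.isAcyclic
  have hle := induce_le (Set.union_subset hPH (Set.singleton_subset_iff.mpr hr))
  have hTP : treeOut G H r e ⊆ P := by
    obtain ⟨f, hfe, hf⟩ := exists_mem_treeOut hH hr (edgeSet_mono hle he)
    have hfP : f ∈ P := (mem_verts_of_mem_edge he hfe).resolve_right
      (by rintro rfl; exact root_not_mem_treeOut hf)
    exact (hP e (edgeSet_mono hle he)).resolve_right fun hd => hd.ne_of_mem hf hfP rfl
  ext x
  constructor
  · intro hx
    obtain ⟨hxv, hnr⟩ := mem_treeOut.mp hx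
    refine mem_treeOut.mpr ⟨hle.1 hxv, fun hrx => hnr ?_⟩
    have hxP : x ∈ P := hxv.resolve_right (by rintro rfl; exact root_not_mem_treeOut hx)
    obtain ⟨p, hp⟩ := hrx.exists_isPath
    have hsupp := support_subset_of_isPath hac hP (p.mapLe (deleteEdges_le _)) (hp.mapLe _) hxP
    rw [Walk.support_mapLe_eq_support] at hsupp
    refine p.reachable_of_support_subset (fun a ha b hb h => ?_) hsupp
    rw [SimpleGraph.deleteEdges_adj] at h ⊢
    exact ⟨⟨ha, hb, h.1⟩, h.2⟩
  · intro hx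
    obtain ⟨-, hnr⟩ := mem_treeOut.mp hx
    exact mem_treeOut.mpr ⟨Or.inl (hTP hx),
      fun hrx => hnr (hrx.mono (deleteEdges_mono (spanningCoe_le_of_le hle)))⟩

end Restriction

section Wedge

open Subgraph

variable {G : SimpleGraph V} {ι : Type*} {Hs : ι → G.Subgraph} {w : V}

theorem adj_of_adj_iSup (hinter : Pairwise fun i j => (Hs i).verts ∩ (Hs j).verts ⊆ {w})
    {i : ι} {a b : V} (h : (⨆ i, Hs i).Adj a b) (ha : a ∈ (Hs i).verts) (haw : a ≠ w) :
    (Hs i).Adj a b := by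
  obtain ⟨j, hj⟩ := iSup_adj.mp h
  rcases eq_or_ne j i with rfl | hji
  · exact hj
  · exact absurd (hinter hji ⟨hj.fst_mem, ha⟩) haw

theorem reachable_iSup_deleteEdges_iff
    (hinter : Pairwise fun i j => (Hs i).verts ∩ (Hs j).verts ⊆ {w}) {i : ι} {E : Set (Sym2 V)}
    {a x : V} (ha : a ∈ (Hs i).verts) (hx : x ∈ (Hs i).verts) :
    ((⨆ i, Hs i).spanningCoe.deleteEdges E).Reachable a x ↔
      ((Hs i).spanningCoe.deleteEdges E).Reachable a x := by
  refine ⟨fun h => h.of_attachedAt (w := w)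
    (fun _ _ h => (SimpleGraph.deleteEdges_adj.mp h).1.fst_mem) (fun _ _ h ha haw => ?_) ha hx,
    fun h => h.mono (deleteEdges_mono (spanningCoe_le_of_le (le_iSup Hs i)))⟩
  rw [SimpleGraph.deleteEdges_adj] at h ⊢
  exact ⟨adj_of_adj_iSup hinter h.1 ha haw, h.2⟩

theorem pairwise_inter_verts_fin_two {H₁ H₂ : G.Subgraph} (h : H₁.verts ∩ H₂.verts ⊆ {w}) :
    Pairwise fun i j => (![H₁, H₂] i).verts ∩ (![H₁, H₂] j).verts ⊆ {w} := by
  intro i j hij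
  fin_cases i <;> fin_cases j
  · exact absurd rfl hij
  · exact h
  · exact Set.inter_comm _ _ ▸ h
  · exact absurd rfl hij

variable (hw : ∀ i, w ∈ (Hs i).verts)
  (hinter : Pairwise fun i j => (Hs i).verts ∩ (Hs j).verts ⊆ {w})
include hw hinter

theorem isTree_iSup [Nonempty ι] (hH : ∀ i, (Hs i).coe.IsTree) : (⨆ i, Hs i).coe.IsTree := by
  refine ⟨connected_coe_iff.mpr ⟨⟨w, verts_iSup ▸ Set.mem_iUnion.mpr ⟨Classical.arbitrary ι, hw _⟩⟩,
    ?_⟩, ?_⟩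
  · have hwx : ∀ x ∈ (⨆ i, Hs i).verts, (⨆ i, Hs i).spanningCoe.Reachable w x := by
      intro x hx
      obtain ⟨i, hx⟩ := Set.mem_iUnion.mp (verts_iSup ▸ hx)
      exact ((connected_coe_iff.mp (hH i).connected).2 w (hw i) x hx).mono
        (spanningCoe_le_of_le (le_iSup Hs i))
    exact fun u hu v hv => (hwx u hu).symm.trans (hwx v hv)
  · rw [← isAcyclic_spanningCoe_iff, isAcyclic_iff_forall_adj_isBridge]
    intro a b hab
    rw [isBridge_iff]
    intro hr
    obtain ⟨i, habi⟩ := iSup_adj.mp hab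
    exact (isAcyclic_spanningCoe_iff.mpr (hH i).isAcyclic).not_reachable_deleteEdges habi
      ((reachable_iSup_deleteEdges_iff hinter habi.fst_mem habi.snd_mem).mp hr)

theorem treeOut_iSup (hH : ∀ i, (Hs i).coe.Connected) {i : ι} {e : Sym2 V}
    (he : e ∈ (Hs i).edgeSet) : treeOut G (⨆ i, Hs i) w e = treeOut G (Hs i) w e := by
  ext x
  simp only [mem_treeOut, verts_iSup, Set.mem_iUnion]
  constructor
  · rintro ⟨⟨j, hxj⟩, hnr⟩
    by_cases hxi : x ∈ (Hs i).verts
    · exact ⟨hxi, fun h => hnr ((reachable_iSup_deleteEdges_iff hinter (hw i) hxi).mpr h)⟩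
    · have hij : i ≠ j := by rintro rfl; exact hxi hxj
      have hej : e ∉ (Hs j).edgeSet :=
        Set.disjoint_left.mp (disjoint_edgeSet_of_inter_subset_singleton (hinter hij)) he
      refine absurd ?_ hnr
      rw [reachable_iSup_deleteEdges_iff hinter (hw j) hxj,
        deleteEdges_eq_self.mpr (Set.disjoint_singleton_right.mpr hej)]
      exact (connected_coe_iff.mp (hH j)).2 w (hw j) x hxj
  · rintro ⟨hxi, hnr⟩
    exact ⟨⟨i, hxi⟩, fun h => hnr ((reachable_iSup_deleteEdges_iff hinter (hw i) hxi).mp h)⟩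

theorem safeTree_iSup {K : ℕ} (hH : ∀ i, (Hs i).coe.Connected)
    (hsafe : ∀ i, SafeTree G K (Hs i) w) :
    SafeTree G K (⨆ i, Hs i) w := by
  intro e he
  obtain ⟨i, he⟩ := Set.mem_iUnion.mp (edgeSet_iSup Hs ▸ he)
  rw [treeOut_iSup hw hinter hH he]
  exact hsafe i e he

end Wedge

section Hubs

open Function Subgraph

variable {G : SimpleGraph V} {K : ℕ} {X Z : Set V} {u w : V}

theorem mem_cutVerts_iff : w ∈ cutVerts G X ↔ ∃ y, G.Adj w y ∧ (w ∈ X ↔ y ∉ X) := by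
  constructor
  · rintro ⟨_, ⟨he, a, b, rfl, ha, hb⟩, hw⟩
    rcases Sym2.mem_iff.mp hw with rfl | rfl
    · exact ⟨b, he, iff_of_true ha hb⟩
    · exact ⟨a, G.adj_symm he, iff_of_false hb (not_not.mpr ha)⟩
  · rintro ⟨y, hwy, hiff⟩
    by_cases hw : w ∈ X
    · exact ⟨s(w, y), ⟨hwy, w, y, rfl, hw, hiff.mp hw⟩, Sym2.mem_mk_left w y⟩
    · exact ⟨s(y, w), ⟨hwy.symm, y, w, rfl, not_not.mp (mt hiff.mpr hw), hw⟩,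
        Sym2.mem_mk_right y w⟩

variable {ι : Type*} {Zs : ι → Set V}

theorem isHub_iUnion [Nonempty ι] (hdisj : Pairwise (Disjoint on Zs))
    (hw : w ∈ cutVerts G (⋃ i, Zs i)) (h : ∀ i, IsHub G K (Zs i) w) :
    IsHub G K (⋃ i, Zs i) w := by
  choose _ Hs hHv hH hsafe using h
  have hw' : ∀ i, w ∈ (Hs i).verts := fun i => hHv i ▸ Or.inr rfl
  have hinter : Pairwise fun i j => (Hs i).verts ∩ (Hs j).verts ⊆ {w} := by
    intro i j hij
    rw [hHv, hHv, ← Set.inter_union_distrib_right, (hdisj hij).inter_eq, Set.empty_union]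
  refine ⟨hw, ⨆ i, Hs i, ?_, isTree_iSup hw' hinter hH,
    safeTree_iSup hw' hinter (fun i => (hH i).connected) hsafe⟩
  rw [verts_iSup, Set.iUnion_union]
  exact Set.iUnion_congr hHv

theorem isHub_of_adj_isHub (hZ : (cutEdges G Z).ncard = K) (hu : IsHub G K Z u) (huZ : u ∈ Z)
    (huw : G.Adj u w) (hwZ : w ∉ Z) : IsHub G K Z w := by
  obtain ⟨-, H, hHv, hH, hsafe⟩ := hu
  rw [Set.union_eq_left.mpr (Set.singleton_subset_iff.mpr huZ)] at hHv
  set Hs : Fin 2 → G.Subgraph := ![H, G.subgraphOfAdj huw]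
  have hu' : ∀ i, u ∈ (Hs i).verts := Fin.forall_fin_two.mpr ⟨hHv ▸ huZ, Or.inl rfl⟩
  have hinter : Pairwise fun i j => (Hs i).verts ∩ (Hs j).verts ⊆ {u} := by
    refine pairwise_inter_verts_fin_two ?_
    rintro x ⟨hx, rfl | rfl⟩
    · rfl
    · exact absurd (hHv ▸ hx) hwZ
  have hconn : ∀ i, (Hs i).coe.Connected :=
    Fin.forall_fin_two.mpr ⟨hH.connected, (Subgraph.subgraphOfAdj_connected huw).coe⟩
  have hverts : (⨆ i, Hs i).verts = Z ∪ {w} := by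
    ext x
    simp only [verts_iSup, Set.mem_iUnion, Fin.exists_fin_two, Hs, Matrix.cons_val_zero,
      Matrix.cons_val_one, hHv, subgraphOfAdj_verts, Set.mem_union, Set.mem_insert_iff,
      Set.mem_singleton_iff]
    constructor
    · rintro (h | rfl | rfl) <;> simp_all
    · rintro (h | rfl) <;> simp_all
  refine ⟨mem_cutVerts_iff.mpr ⟨u, huw.symm, iff_of_false hwZ (not_not.mpr huZ)⟩, ⨆ i, Hs i,
    hverts, isTree_iSup hu' hinter (Fin.forall_fin_two.mpr ⟨hH, IsTree.coe_subgraphOfAdj huw⟩),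
    fun e he => ?_⟩
  obtain ⟨i, he⟩ := Set.mem_iUnion.mp (edgeSet_iSup Hs ▸ he)
  fin_cases i
  · have hwu : ((⨆ i, Hs i).spanningCoe.deleteEdges {e}).Reachable u w := by
      refine Adj.reachable (SimpleGraph.deleteEdges_adj.mpr ⟨iSup_adj.mpr ⟨1, ?_⟩, fun h => ?_⟩)
      · simp [Hs]
      · exact hwZ (hHv ▸ mem_verts_of_mem_edge he
          (Set.mem_singleton_iff.mp h ▸ Sym2.mem_mk_right u w))
    rw [treeOut_eq_of_reachable hwu, treeOut_iSup hu' hinter hconn he]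
    exact hsafe e he
  · obtain rfl : e = s(u, w) := by simpa [Hs] using he
    have hiso : ∀ y, ¬ ((⨆ i, Hs i).spanningCoe.deleteEdges {s(u, w)}).Adj w y := by
      intro y hy
      obtain ⟨hadj, hne⟩ := SimpleGraph.deleteEdges_adj.mp hy
      obtain ⟨i, hi⟩ := iSup_adj.mp hadj
      fin_cases i
      · exact hwZ (hHv ▸ hi.fst_mem)
      · exact hne (show s(u, w) = s(w, y) from hi).symm
    rw [treeOut_eq_diff_of_forall_not_adj hiso, hverts, Set.union_sdiff_right,
      Set.sdiff_singleton_eq_self hwZ, hZ]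

end Hubs

section Laminar

open Function Subgraph

variable {G : SimpleGraph V} {K : ℕ} {Z : Set V} {w : V} {ι : Type*} {Zs : ι → Set V}
  (hdisj : Pairwise (Disjoint on Zs)) (hne : ∀ i, (Zs i).Nonempty) (hsub : ∀ i, Zs i ⊆ Z)
  (hlam : ∀ X : Set V, IsKCut G K X → X ⊂ Z → ∃ i, X ⊆ Zs i)
include hdisj hne hsub hlam

theorem isHub_of_forall_treeOut {H : G.Subgraph} {r : V} (hH : H.coe.IsTree) (hr : r ∈ H.verts)
    (hZH : Z ⊆ H.verts) (hrZ : r ∈ cutVerts G Z)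
    (hT : ∀ e ∈ H.edgeSet, Disjoint (treeOut G H r e) Z ∨
      (treeOut G H r e ⊂ Z ∧ (cutEdges G (treeOut G H r e)).ncard = K)) (i : ι) :
    IsHub G K (Zs i) r := by
  have hP : ∀ e ∈ H.edgeSet, treeOut G H r e ⊆ Zs i ∨ Disjoint (treeOut G H r e) (Zs i) := by
    intro e he
    rcases hT e he with hd | ⟨hZ, hK⟩
    · exact Or.inr (hd.mono_right (hsub i))
    · obtain ⟨f, -, hf⟩ := exists_mem_treeOut hH hr he
      obtain ⟨j, hj⟩ := hlam _ ⟨⟨f, hf⟩, fun h => root_not_mem_treeOut (h ▸ Set.mem_univ r), hK⟩ hZ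
      rcases eq_or_ne j i with rfl | hji
      · exact Or.inl hj
      · exact Or.inr ((hdisj hji).mono_left hj)
  have hPH := (hsub i).trans hZH
  have hHi := isTree_induce hH hr hPH hP
  refine ⟨?_, H.induce (Zs i ∪ {r}), rfl, hHi, fun e he => ?_⟩
  · rw [mem_cutVerts_iff]
    by_cases hri : r ∈ Zs i
    · obtain ⟨y, hry, hy⟩ := mem_cutVerts_iff.mp hrZ
      exact ⟨y, hry, iff_of_true hri fun hy' => hy.mp (hsub i hri) (hsub i hy')⟩
    · obtain ⟨x, hx⟩ := hne i
      obtain ⟨p⟩ := (connected_coe_iff.mp hHi.connected).2 x (Or.inl hx) r (Or.inr rfl)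
      obtain ⟨d, -, hd, hd'⟩ := p.exists_boundary_dart (Zs i) hx hri
      obtain ⟨-, hdr, hdH⟩ : (H.induce (Zs i ∪ {r})).Adj d.fst d.snd := d.adj
      rw [hdr.resolve_left hd'] at hdH
      exact ⟨d.fst, hdH.adj_sub.symm, iff_of_false hri (not_not.mpr hd)⟩
  · obtain ⟨f, -, hf⟩ := exists_mem_treeOut hHi (Or.inr rfl) he
    have hfi : f ∈ Zs i := (treeOut_subset_diff hf).1.resolve_right (treeOut_subset_diff hf).2
    rw [treeOut_induce hH hr hPH hP he] at hf ⊢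
    have heH := edgeSet_mono (induce_le (Set.union_subset hPH (Set.singleton_subset_iff.mpr hr))) he
    exact ((hT e heH).resolve_left fun hd => hd.ne_of_mem hf (hsub i hfi) rfl).2

theorem exists_adj_isHub_of_treeOut_eq {H : G.Subgraph} (hHv : H.verts = Z ∪ {w})
    (hH : H.coe.IsTree) (hsafe : SafeTree G K H w) {e₀ : Sym2 V} (he₀ : e₀ ∈ H.edgeSet)
    (hZ : treeOut G H w e₀ = Z) : w ∉ Z ∧ ∃ b ∈ Z, G.Adj b w ∧ ∀ i, IsHub G K (Zs i) b := by
  have hwZ : w ∉ Z := hZ ▸ root_not_mem_treeOut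
  have hw : w ∈ H.verts := hHv ▸ Or.inr rfl
  have hZH : Z ⊆ H.verts := hHv ▸ Set.subset_union_left
  obtain ⟨b, hwb, rfl⟩ : ∃ b, H.Adj w b ∧ e₀ = s(w, b) := by
    induction e₀ using Sym2.ind with | _ a b => ?_
    have hab : H.Adj a b := he₀
    rcases not_mem_treeOut_or hH.connected hw hab with ha | hb
    · obtain rfl : a = w := (hHv ▸ hab.fst_mem : a ∈ Z ∪ {w}).resolve_left (hZ ▸ ha)
      exact ⟨b, hab, rfl⟩
    · obtain rfl : b = w := (hHv ▸ hab.snd_mem : b ∈ Z ∪ {w}).resolve_left (hZ ▸ hb)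
      exact ⟨a, hab.symm, Sym2.eq_swap⟩
  have hbZ : b ∈ Z := hZ ▸ mem_treeOut_of_not_mem
    (isAcyclic_spanningCoe_iff.mpr hH.isAcyclic) hwb root_not_mem_treeOut
  have hbw := hwb.adj_sub.symm
  refine ⟨hwZ, b, hbZ, hbw, isHub_of_forall_treeOut hdisj hne hsub hlam hH hwb.snd_mem hZH
    (mem_cutVerts_iff.mpr ⟨w, hbw, iff_of_true hbZ hwZ⟩) fun e he => ?_⟩
  by_cases hew : e = s(w, b)
  · subst hew
    refine Or.inl (Set.disjoint_left.mpr fun x hxb hxZ => ?_)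
    rw [← hZ] at hxZ
    rcases ((connected_coe_iff.mp hH.connected).2 x hxZ.1 w hw).deleteEdges_or b with h | h
    · exact (mem_treeOut.mp hxZ).2 h.symm
    · exact (mem_treeOut.mp hxb).2 h.symm
  · have hwb' : (H.spanningCoe.deleteEdges {e}).Adj w b :=
      SimpleGraph.deleteEdges_adj.mpr ⟨hwb, fun h => hew (Set.mem_singleton_iff.mp h).symm⟩
    have hbT : b ∉ treeOut G H w e := treeOut_eq_of_reachable hwb'.reachable ▸ root_not_mem_treeOut
    rw [treeOut_eq_of_reachable hwb'.reachable]
    exact Or.inr ⟨(Set.ssubset_iff_of_subset (treeOut_subset_of_verts_eq hHv)).mpr ⟨b, hbZ, hbT⟩,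
      hsafe e he⟩

theorem isHub_parts_or_of_isHub (hw : IsHub G K Z w) :
    (∀ i, IsHub G K (Zs i) w) ∨ (w ∉ Z ∧ ∃ b ∈ Z, G.Adj b w ∧ ∀ i, IsHub G K (Zs i) b) := by
  obtain ⟨hwZ, H, hHv, hH, hsafe⟩ := hw
  by_cases hB : ∃ e ∈ H.edgeSet, treeOut G H w e = Z
  · obtain ⟨e, he, hZ⟩ := hB
    exact Or.inr (exists_adj_isHub_of_treeOut_eq hdisj hne hsub hlam hHv hH hsafe he hZ)
  · exact Or.inl (isHub_of_forall_treeOut hdisj hne hsub hlam hH (hHv ▸ Or.inr rfl)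
      (hHv ▸ Set.subset_union_left) hwZ fun e he =>
        Or.inr ⟨Set.ssubset_iff_subset_ne.mpr
          ⟨treeOut_subset_of_verts_eq hHv, fun h => hB ⟨e, he, h⟩⟩, hsafe e he⟩)

end Laminar

theorem hubs_type0_general {V : Type*} (K : ℕ)
    (G : SimpleGraph V)
    (Z : Set V) (hZ : IsKCut G K Z)
    (t : ℕ) (Zs : Fin t → Set V)
    (hdisj : ∀ i j, i ≠ j → Disjoint (Zs i) (Zs j))
    (hne : ∀ i, (Zs i).Nonempty)
    (hunion : Z = ⋃ i, Zs i)
    (hlam : ∀ X : Set V, IsKCut G K X → X ⊂ Z → ∃ i, X ⊆ Zs i) :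
    hubSet G K Z =
      (cutVerts G Z ∩ ⋂ i, hubSet G K (Zs i)) ∪
        (nbrSet G ((cutVerts G Z ∩ ⋂ i, hubSet G K (Zs i)) ∩ Z) \ Z) := by
  have hsub : ∀ i, Zs i ⊆ Z := fun i => hunion ▸ Set.subset_iUnion Zs i
  have hdisj' : Pairwise (Function.onFun Disjoint Zs) := fun i j hij => hdisj i j hij
  have hglue : ∀ v ∈ cutVerts G Z ∩ ⋂ i, hubSet G K (Zs i), IsHub G K Z v := by
    rintro v ⟨hv, hvi⟩
    obtain ⟨i, -⟩ := Set.nonempty_iUnion.mp (hunion ▸ hZ.1)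
    have : Nonempty (Fin t) := ⟨i⟩
    exact hunion ▸ isHub_iUnion hdisj' (hunion ▸ hv) (Set.mem_iInter.mp hvi)
  ext w
  constructor
  · intro hw
    rcases isHub_parts_or_of_isHub hdisj' hne hsub hlam hw with h | ⟨hwZ, b, hbZ, hbw, hb⟩
    · exact Or.inl ⟨(hw : IsHub G K Z w).1, Set.mem_iInter.mpr h⟩
    · exact Or.inr ⟨⟨b, ⟨⟨mem_cutVerts_iff.mpr ⟨w, hbw, iff_of_true hbZ hwZ⟩,
        Set.mem_iInter.mpr hb⟩, hbZ⟩, hbw⟩, hwZ⟩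
  · rintro (hw | ⟨⟨u, ⟨hu, huZ⟩, huw⟩, hwZ⟩)
    · exact hglue w hw
    · exact isHub_of_adj_isHub hZ.2.2 (hglue u hu) huZ huw hwZ

/-- (Hub recurrence for Type-0 internal nodes.) -/
theorem hubs_type0 {V : Type*} [Fintype V] (K : ℕ)
    (G : SimpleGraph V) (hG : KEdgeConnected G K)
    (Z : Set V) (hZ : IsKCut G K Z)
    (t : ℕ) (Zs : Fin t → Set V)
    (hdisj : ∀ i j, i ≠ j → Disjoint (Zs i) (Zs j))
    (hne : ∀ i, (Zs i).Nonempty)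
    (hunion : Z = ⋃ i, Zs i)
    (hcuts : ∀ i, IsKCut G K (Zs i))
    (hlam : ∀ X : Set V, IsKCut G K X → X ⊂ Z → ∃ i, X ⊆ Zs i) :
    hubSet G K Z =
      (cutVerts G Z ∩ ⋂ i, hubSet G K (Zs i)) ∪
        (nbrSet G ((cutVerts G Z ∩ ⋂ i, hubSet G K (Zs i)) ∩ Z) \ Z) :=
  hubs_type0_general K G Z hZ t Zs hdisj hne hunion hlam
end

section
/- Let G be a K-edge-connected finite simple graph and let Z_{s-1}, Z_s, ..., Z_ℓ be pairwise disjoint vertex sets such that ∂Z_i is a K-cut for each i = s-1, ..., ℓ-1. Suppose w_s, w_{s+1}, ..., w_ℓ is a back spine, that is, a path in G (consecutive vertices adjacent in G) such that w_s ∈ Z_s ∩ H̃(Z_{s-1}) ∩ H̃(Z_s), w_i ∈ Z_i ∩ H̃(Z_i) for each i = s+1, ..., ℓ-1, and w_ℓ ∈ Z_ℓ. Then w_i ∈ H̃(Z_{i-1}) for all i = s, ..., ℓ. -/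
/-!
If `u ∈ Z` is a hub for `Z` and `v ∉ Z` is a neighbour of `u`, then `v` is a hub for `Z` as
well: hang the pendant edge `uv` on the safe tree of `u`. Every old tree edge cuts off the same
vertex set as before, seen from `v` instead of `u`, and the new edge cuts off exactly `Z`, whose
cut has `K` edges. Along the back spine, `w_{i-1} ∈ Z_{i-1}` is a hub for `Z_{i-1}`, and
`w_i ∉ Z_{i-1}` by disjointness, so this step applies to every consecutive pair.
-/

open SimpleGraph

variable {V : Type*}

namespace SimpleGraph

theorem IsAcyclic.spanningCoe {s : Set V} {G : SimpleGraph s} (h : G.IsAcyclic) :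
    G.spanningCoe.IsAcyclic := by
  intro a c hc
  have hs : ∀ x ∈ c.support, x ∈ s := fun x hx => by
    obtain ⟨e, he, hxe⟩ := (Walk.mem_support_iff_exists_mem_edges_of_not_nil hc.not_nil).mp hx
    induction e using Sym2.ind with
    | _ a b =>
      rcases Sym2.mem_iff.mp hxe with rfl | rfl
      · exact Subgraph.mem_of_adj_spanningCoe G (c.adj_of_mem_edges he)
      · exact Subgraph.mem_of_adj_spanningCoe G (c.adj_of_mem_edges he).symm
  rw [← induce_spanningCoe (G := G)] at h
  refine h (c.induce s hs) ((Walk.isCycle_map_iff_of_injective (f := (Embedding.induce s).toHom)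
    Subtype.val_injective).mp ?_)
  rwa [Walk.map_induce]

theorem reachable_iff_eq_of_forall_not_adj {G : SimpleGraph V} {v x : V} (hv : ∀ a, ¬ G.Adj v a) :
    G.Reachable v x ↔ x = v := by
  refine ⟨fun ⟨p⟩ => ?_, fun h => h ▸ .rfl⟩
  cases p with
  | nil => rfl
  | cons h _ => exact absurd h (hv _)

theorem reachable_sup_edge_iff_of_forall_not_adj {G : SimpleGraph V} {u v x : V}
    (hv : ∀ a, ¬ G.Adj v a) :
    (G ⊔ edge u v).Reachable v x ↔ x = v ∨ G.Reachable u x := by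
  refine ⟨fun ⟨p⟩ => ?_, ?_⟩
  · by_contra hx
    obtain ⟨d, -, hfst, hsnd⟩ := p.exists_boundary_dart {y | y = v ∨ G.Reachable u y} (.inl rfl) hx
    simp only [Set.mem_ofPred_eq, not_or] at hfst hsnd
    rcases d.adj with h | h
    · rcases hfst with hv' | hr
      · exact hv _ (hv' ▸ h)
      · exact hsnd.2 (hr.trans h.reachable)
    · rw [edge_adj] at h
      grind [Reachable.refl]
  · rintro (rfl | hr)
    · rfl
    · obtain rfl | huv := eq_or_ne u v
      · exact (reachable_iff_eq_of_forall_not_adj hv).mp hr ▸ .rfl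
      · have hvu : (G ⊔ edge u v).Adj v u := .inr ((edge_adj ..).2 ⟨.inr ⟨rfl, rfl⟩, huv.symm⟩)
        exact hvu.reachable.trans (hr.mono le_sup_left)

end SimpleGraph

namespace SimpleGraph.Subgraph

variable {G : SimpleGraph V} {H : G.Subgraph} {u v : V}

theorem not_adj_spanningCoe_of_notMem (hv : v ∉ H.verts) (a : V) : ¬ H.spanningCoe.Adj v a :=
  fun h => hv (H.edge_vert h)

theorem spanningCoe_sup_subgraphOfAdj (huv : G.Adj u v) :
    (H ⊔ G.subgraphOfAdj huv).spanningCoe = H.spanningCoe ⊔ edge u v := by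
  ext a b
  simp [edge_adj]

theorem spanningCoe_deleteEdges_sup_subgraphOfAdj (huv : G.Adj u v) (s : Set (Sym2 V)) :
    ((H ⊔ G.subgraphOfAdj huv).deleteEdges s).spanningCoe =
      (H.deleteEdges s).spanningCoe ⊔ (edge u v).deleteEdges s := by
  rw [← deleteEdges_spanningCoe_eq, ← deleteEdges_spanningCoe_eq, spanningCoe_sup_subgraphOfAdj,
    deleteEdges_sup]

theorem isTree_coe_sup_subgraphOfAdj (huv : G.Adj u v) (ht : H.coe.IsTree) (hu : u ∈ H.verts)
    (hv : v ∉ H.verts) : (H ⊔ G.subgraphOfAdj huv).coe.IsTree := by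
  refine ⟨(connected_sup (H.preconnected_iff.mpr ht.connected.preconnected)
    (subgraphOfAdj_connected huv).preconnected ⟨u, hu, by simp⟩).coe, ?_⟩
  have hac : (H ⊔ G.subgraphOfAdj huv).spanningCoe.IsAcyclic := by
    rw [spanningCoe_sup_subgraphOfAdj]
    refine IsAcyclic.sup_edge_of_not_reachable (fun hr => ?_) ?_
    · exact hv ((reachable_iff_eq_of_forall_not_adj (not_adj_spanningCoe_of_notMem hv)).mp
        hr.symm ▸ hu)
    · rw [← spanningCoe_coe]
      exact ht.isAcyclic.spanningCoe
  exact hac.embedding (H ⊔ G.subgraphOfAdj huv).coeEmbeddingSpanningCoe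

theorem treeOut_sup_subgraphOfAdj_of_mem (huv : G.Adj u v) (hv : v ∉ H.verts) {e : Sym2 V}
    (he : e ∈ H.edgeSet) : treeOut G (H ⊔ G.subgraphOfAdj huv) v e = treeOut G H u e := by
  have hne : s(u, v) ≠ e := fun h => hv (H.mem_verts_of_mem_edge (h ▸ he) (Sym2.mem_mk_right u v))
  have hedge : (edge u v).deleteEdges {e} = edge u v :=
    deleteEdges_eq_self.mpr (Set.disjoint_singleton_right.mpr
      fun h => hne (edgeSet_edge_subset h).symm)
  have hiso : ∀ a, ¬ (H.deleteEdges {e}).spanningCoe.Adj v a :=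
    not_adj_spanningCoe_of_notMem (by simpa using hv)
  ext x
  simp only [treeOut, spanningCoe_deleteEdges_sup_subgraphOfAdj, hedge,
    reachable_sup_edge_iff_of_forall_not_adj hiso, verts_sup, subgraphOfAdj_verts]
  grind [Reachable.refl]

theorem treeOut_sup_subgraphOfAdj_self (huv : G.Adj u v) (hu : u ∈ H.verts) (hv : v ∉ H.verts) :
    treeOut G (H ⊔ G.subgraphOfAdj huv) v s(u, v) = H.verts := by
  have hiso : ∀ a, ¬ (H.deleteEdges {s(u, v)}).spanningCoe.Adj v a :=
    not_adj_spanningCoe_of_notMem (by simpa using hv)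
  ext x
  simp only [treeOut, spanningCoe_deleteEdges_sup_subgraphOfAdj,
    deleteEdges_edge (Set.mem_singleton _), sup_bot_eq, reachable_iff_eq_of_forall_not_adj hiso,
    verts_sup, subgraphOfAdj_verts]
  grind

end SimpleGraph.Subgraph

theorem IsHub.of_adj {G : SimpleGraph V} {K : ℕ} {Z : Set V} {u v : V}
    (hK : (cutEdges G Z).ncard = K) (huZ : u ∈ Z) (hvZ : v ∉ Z) (huv : G.Adj u v)
    (hu : IsHub G K Z u) : IsHub G K Z v := by
  obtain ⟨-, H, hHverts, htree, hsafe⟩ := hu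
  have hH : H.verts = Z := by rw [hHverts, Set.union_singleton, Set.insert_eq_of_mem huZ]
  have hvH : v ∉ H.verts := hH ▸ hvZ
  refine ⟨⟨s(u, v), ⟨huv, u, v, rfl, huZ, hvZ⟩, Sym2.mem_mk_right u v⟩, H ⊔ G.subgraphOfAdj huv,
    ?_, Subgraph.isTree_coe_sup_subgraphOfAdj huv htree (hH ▸ huZ) hvH, ?_⟩
  · simp only [Subgraph.verts_sup, subgraphOfAdj_verts, hH]
    grind
  · intro e he
    rw [Subgraph.edgeSet_sup, edgeSet_subgraphOfAdj] at he
    rcases he with he | rfl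
    · rw [Subgraph.treeOut_sup_subgraphOfAdj_of_mem huv hvH he]
      exact hsafe e he
    · rw [Subgraph.treeOut_sup_subgraphOfAdj_self huv (hH ▸ huZ) hvH, hH]
      exact hK

theorem back_spine_hubs_general {V : Type*} (K : ℕ)
    (G : SimpleGraph V)
    (s ℓ : ℕ)
    (Z : ℕ → Set V) (w : ℕ → V)
    (hdisj : ∀ i j, s - 1 ≤ i → i < j → j ≤ ℓ → Disjoint (Z i) (Z j))
    (hcuts : ∀ i, s - 1 ≤ i → i ≤ ℓ - 1 → IsKCut G K (Z i))
    (hpath : ∀ i, s ≤ i → i < ℓ → G.Adj (w i) (w (i + 1)))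
    (hws : w s ∈ Z s ∧ w s ∈ hubSet G K (Z (s - 1)) ∧ w s ∈ hubSet G K (Z s))
    (hwi : ∀ i, s + 1 ≤ i → i ≤ ℓ - 1 → w i ∈ Z i ∧ w i ∈ hubSet G K (Z i))
    (hwl : w ℓ ∈ Z ℓ) :
    ∀ i, s ≤ i → i ≤ ℓ → w i ∈ hubSet G K (Z (i - 1)) := by
  intro i hsi hil
  obtain rfl | hlt := hsi.eq_or_lt
  · exact hws.2.1
  obtain ⟨j, rfl⟩ : ∃ j, i = j + 1 := ⟨i - 1, by omega⟩
  have hprev : w j ∈ Z j ∧ w j ∈ hubSet G K (Z j) := by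
    obtain rfl | hsj := (Nat.le_of_lt_succ hlt).eq_or_lt
    · exact ⟨hws.1, hws.2.2⟩
    · exact hwi j hsj (by omega)
  have hnext_mem : w (j + 1) ∈ Z (j + 1) := by
    obtain rfl | hjl := hil.eq_or_lt
    · exact hwl
    · exact (hwi (j + 1) (by omega) (by omega)).1
  have hnext_notMem : w (j + 1) ∉ Z j :=
    Set.disjoint_right.mp (hdisj j (j + 1) (by omega) j.lt_succ_self hil) hnext_mem
  exact IsHub.of_adj (hcuts j (by omega) (by omega)).2.2 hprev.1 hnext_notMem
    (hpath j (by omega) (by omega)) hprev.2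

/-- (Back spines consist of hubs.) If `w_s, …, w_ℓ` is a back spine,
then `w_i ∈ H̃(Z_{i-1})` for all `i = s, …, ℓ`. -/
theorem back_spine_hubs {V : Type*} [Fintype V] (K : ℕ)
    (G : SimpleGraph V) (hG : KEdgeConnected G K)
    (s ℓ : ℕ) (hs : 1 ≤ s) (hsl : s ≤ ℓ)
    (Z : ℕ → Set V) (w : ℕ → V)
    (hdisj : ∀ i j, s - 1 ≤ i → i < j → j ≤ ℓ → Disjoint (Z i) (Z j))
    (hcuts : ∀ i, s - 1 ≤ i → i ≤ ℓ - 1 → IsKCut G K (Z i))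
    (hpath : ∀ i, s ≤ i → i < ℓ → G.Adj (w i) (w (i + 1)))
    (hws : w s ∈ Z s ∧ w s ∈ hubSet G K (Z (s - 1)) ∧ w s ∈ hubSet G K (Z s))
    (hwi : ∀ i, s + 1 ≤ i → i ≤ ℓ - 1 → w i ∈ Z i ∧ w i ∈ hubSet G K (Z i))
    (hwl : w ℓ ∈ Z ℓ) :
    ∀ i, s ≤ i → i ≤ ℓ → w i ∈ hubSet G K (Z (i - 1)) :=
  back_spine_hubs_general K G s ℓ Z w hdisj hcuts hpath hws hwi hwl
end

section
/- Let G be a K-edge-connected finite simple graph with at least two vertices and let r be a vertex of G of degree exactly K. Then G has a spanning tree of congestion at most K if and only if r is a hub for V(G) ∖ {r}. Consequently, stc(G) = K if and only if r ∈ H̃(V(G) ∖ {r}). -/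
open SimpleGraph

variable {V : Type*}

/-!
For a `K`-edge-connected graph every edge of a spanning tree has congestion at least `K`, so a
spanning tree has congestion at most `K` exactly when each of its fundamental cuts has exactly `K`
edges. For `Z = V ∖ {r}` a spanning tree of `G[Z ∪ {r}]` is just a spanning tree of `G`, and
`T_out(r, e)` is one shore of the fundamental cut of `e`; so `(T, r)` is safe precisely when `T`
has congestion `K`. The condition `r ∈ V(∂Z)` only asks for a neighbour of `r`.
-/

lemma cutEdges_compl (G : SimpleGraph V) (X : Set V) : cutEdges G Xᶜ = cutEdges G X := by
  have h : ∀ Y : Set V, cutEdges G Y ⊆ cutEdges G Yᶜ := by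
    rintro Y e ⟨he, u, v, rfl, hu, hv⟩
    exact ⟨he, v, u, Sym2.eq_swap, Set.mem_compl hv, Set.notMem_compl_iff.mpr hu⟩
  exact subset_antisymm (by simpa using h Xᶜ) (h X)

lemma mem_cutVerts_compl_singleton {G : SimpleGraph V} {r w : V} (h : G.Adj r w) :
    r ∈ cutVerts G {r}ᶜ :=
  ⟨s(w, r), ⟨h.symm, w, r, rfl, h.ne', by simp⟩, Sym2.mem_mk_right w r⟩

namespace SimpleGraph

section TreeSide

variable {T : SimpleGraph V} {u v : V}

lemma Preconnected.reachable_deleteEdge_or (hT : T.Preconnected) (u v x : V) :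
    (T.deleteEdges {s(u, v)}).Reachable u x ∨ (T.deleteEdges {s(u, v)}).Reachable v x := by
  set T' := T.deleteEdges {s(u, v)}
  suffices h : ∀ {a} (q : T.Walk a x), T'.Reachable u a ∨ T'.Reachable v a →
      T'.Reachable u x ∨ T'.Reachable v x from (hT u x).elim fun p => h p (.inl .rfl)
  intro a q
  induction q with
  | nil => exact id
  | @cons a b _ hab _ ih =>
    refine fun ha => ih ?_
    by_cases he : s(a, b) = s(u, v)
    · rcases Sym2.eq_iff.mp he with ⟨rfl, rfl⟩ | ⟨rfl, rfl⟩
      exacts [.inr .rfl, .inl .rfl]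
    · have hab' : T'.Adj a b := (deleteEdges_adj ..).mpr ⟨hab, by simpa using he⟩
      exact ha.imp (·.trans hab'.reachable) (·.trans hab'.reachable)

lemma treeSide_eq_of_mem {e : Sym2 V} {x : V} (hx : x ∈ treeSide T u e) :
    treeSide T x e = treeSide T u e :=
  Set.ext fun _ => ⟨(Reachable.trans hx ·), (Reachable.trans (Reachable.symm hx) ·)⟩

lemma IsAcyclic.notMem_treeSide (hT : T.IsAcyclic) (h : T.Adj u v) :
    v ∉ treeSide T u s(u, v) :=
  isBridge_iff.mp (isAcyclic_iff_forall_adj_isBridge.mp hT h)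

lemma IsTree.treeSide_swap (hT : T.IsTree) (h : T.Adj u v) :
    treeSide T v s(u, v) = (treeSide T u s(u, v))ᶜ := by
  ext x
  refine ⟨fun hv hu => hT.isAcyclic.notMem_treeSide h (Reachable.trans hu (Reachable.symm hv)),
    fun hu => ?_⟩
  exact (hT.connected.preconnected.reachable_deleteEdge_or u v x).resolve_left hu

/-- Every vertex lies on one of the two shores of the fundamental cut of a tree edge, so the cut
does not depend on the vertex used to name the shore. -/
lemma IsTree.cutEdges_treeSide (G : SimpleGraph V) (hT : T.IsTree) (h : T.Adj u v) (r : V) :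
    cutEdges G (treeSide T r s(u, v)) = cutEdges G (treeSide T u s(u, v)) := by
  rcases hT.connected.preconnected.reachable_deleteEdge_or u v r with hr | hr
  · rw [treeSide_eq_of_mem hr]
  · rw [treeSide_eq_of_mem hr, hT.treeSide_swap h, cutEdges_compl]

end TreeSide

end SimpleGraph

lemma treeOut_eq_compl_treeSide (G : SimpleGraph V) {H : G.Subgraph} (hH : H.verts = Set.univ)
    (w : V) (e : Sym2 V) : treeOut G H w e = (treeSide H.spanningCoe w e)ᶜ := by
  ext x
  simp [treeOut, treeSide, hH, Subgraph.deleteEdges_spanningCoe_eq]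

lemma safeTree_iff_forall_edgeCong_eq {G : SimpleGraph V} {K : ℕ} {H : G.Subgraph}
    (hH : H.verts = Set.univ) (hT : H.spanningCoe.IsTree) (r : V) :
    SafeTree G K H r ↔ ∀ u v, H.Adj u v → edgeCong G H.spanningCoe u v = K := by
  have hcut : ∀ u v, H.Adj u v →
      (cutEdges G (treeOut G H r s(u, v))).ncard = edgeCong G H.spanningCoe u v := by
    intro u v huv
    rw [treeOut_eq_compl_treeSide G hH, cutEdges_compl, hT.cutEdges_treeSide G huv, edgeCong]
  refine ⟨fun hsafe u v huv => hcut u v huv ▸ hsafe s(u, v) huv, fun h e he => ?_⟩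
  induction e using Sym2.ind with
  | _ u v => exact (hcut u v he).trans (h u v he)

section Congestion

variable {G T : SimpleGraph V} {K : ℕ}

lemma KEdgeConnected.le_edgeCong (hG : KEdgeConnected G K) (hT : T.IsAcyclic) {u v : V}
    (h : T.Adj u v) : K ≤ edgeCong G T u v := by
  refine hG.2.2 _ ⟨u, .rfl⟩ fun huniv => hT.notMem_treeSide h ?_
  exact huniv ▸ Set.mem_univ v

lemma KEdgeConnected.congAtMost_iff (hG : KEdgeConnected G K) (hT : T.IsAcyclic) :
    CongAtMost G T K ↔ ∀ u v, T.Adj u v → edgeCong G T u v = K :=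
  forall₃_congr fun _ _ h => ⟨(le_antisymm · (hG.le_edgeCong hT h)), le_of_eq⟩

lemma edgeCong_le_treeCongestion [Finite V] {u v : V} (h : T.Adj u v) :
    edgeCong G T u v ≤ treeCongestion G T := by
  refine le_csSup ⟨(Set.univ : Set (Sym2 V)).ncard, ?_⟩ ⟨u, v, h, rfl⟩
  rintro _ ⟨_, _, _, rfl⟩
  exact Set.ncard_le_ncard (Set.subset_univ _)

lemma treeCongestion_le_iff [Finite V] : treeCongestion G T ≤ K ↔ CongAtMost G T K :=
  ⟨fun hT u v h => (edgeCong_le_treeCongestion h).trans hT,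
    fun hC => csSup_le' <| by rintro _ ⟨u, v, h, rfl⟩; exact hC u v h⟩

lemma KEdgeConnected.le_treeCongestion [Finite V] (hG : KEdgeConnected G K) (hT : T.IsTree) :
    K ≤ treeCongestion G T := by
  have := hG.1
  obtain ⟨w, hw⟩ := hT.connected.preconnected.exists_adj_of_nontrivial (Classical.arbitrary V)
  exact (hG.le_edgeCong hT.isAcyclic hw).trans (edgeCong_le_treeCongestion hw)

/-- `K` is a lower bound for the congestions of spanning trees, so `stc G = K` says that it is
attained. -/
lemma KEdgeConnected.stc_eq_iff [Finite V] (hG : KEdgeConnected G K) :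
    stc G = K ↔ ∃ T ≤ G, T.IsTree ∧ CongAtMost G T K := by
  set S := {n | ∃ T : SimpleGraph V, T ≤ G ∧ T.IsTree ∧ treeCongestion G T = n}
  have hS : S.Nonempty := by
    obtain ⟨T, hle, hT⟩ := hG.2.1.exists_isTree_le
    exact ⟨_, T, hle, hT, rfl⟩
  have hlb : K ∈ lowerBounds S := by
    rintro _ ⟨T, -, hT, rfl⟩
    exact hG.le_treeCongestion hT
  have hmem : stc G = K ↔ K ∈ S :=
    ⟨fun h => h ▸ Nat.sInf_mem hS, fun h => IsLeast.csInf_eq ⟨h, hlb⟩⟩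
  rw [hmem]
  refine exists_congr fun T => and_congr_right fun _ => and_congr_right fun hT => ?_
  rw [← treeCongestion_le_iff]
  exact ⟨le_of_eq, (le_antisymm · (hG.le_treeCongestion hT))⟩

end Congestion

lemma KEdgeConnected.isHub_compl_singleton_iff {G : SimpleGraph V} {K : ℕ}
    (hG : KEdgeConnected G K) (r : V) :
    IsHub G K {r}ᶜ r ↔ ∃ T ≤ G, T.IsTree ∧ CongAtMost G T K := by
  have huniv : ({r}ᶜ ∪ {r} : Set V) = Set.univ := Set.compl_union_self {r}
  constructor
  · rintro ⟨-, H, hverts, hH, hsafe⟩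
    rw [huniv] at hverts
    have hT : H.spanningCoe.IsTree :=
      (H.spanningCoeEquivCoeOfSpanning (fun v => hverts ▸ Set.mem_univ v)).isTree_iff.mpr hH
    exact ⟨H.spanningCoe, H.spanningCoe_le, hT, (hG.congAtMost_iff hT.isAcyclic).mpr
      ((safeTree_iff_forall_edgeCong_eq hverts hT r).mp hsafe)⟩
  · rintro ⟨T, hle, hT, hC⟩
    have := hG.1
    obtain ⟨w, hw⟩ := hT.connected.preconnected.exists_adj_of_nontrivial r
    let H : G.Subgraph := toSubgraph T hle
    have hH : H.spanningCoe.IsTree := hT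
    refine ⟨mem_cutVerts_compl_singleton (hle hw), H, huniv.symm,
      (H.spanningCoeEquivCoeOfSpanning Set.mem_univ).isTree_iff.mp hT, ?_⟩
    exact (safeTree_iff_forall_edgeCong_eq rfl hH r).mpr ((hG.congAtMost_iff hT.isAcyclic).mp hC)

theorem stc_eq_iff_root_hub_general {V : Type*} [Fintype V] (K : ℕ)
    (G : SimpleGraph V) (hG : KEdgeConnected G K)
    (r : V) :
    ((∃ T : SimpleGraph V, T ≤ G ∧ T.IsTree ∧ CongAtMost G T K) ↔
        IsHub G K ({r}ᶜ) r) ∧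
    (stc G = K ↔ r ∈ hubSet G K ({r}ᶜ)) :=
  ⟨(hG.isHub_compl_singleton_iff r).symm,
    hG.stc_eq_iff.trans (hG.isHub_compl_singleton_iff r).symm⟩

/-- Let `r` be a vertex of degree exactly `K` in a `K`-edge-connected
graph `G`. Then `G` has a spanning tree of congestion at most `K` iff `r` is a hub for
`V ∖ {r}`; consequently `stc(G) = K` iff `r ∈ H̃(V ∖ {r})`. -/
theorem stc_eq_iff_root_hub {V : Type*} [Fintype V] (K : ℕ)
    (G : SimpleGraph V) (hG : KEdgeConnected G K)
    (r : V) (hdeg : (G.neighborSet r).ncard = K) :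
    ((∃ T : SimpleGraph V, T ≤ G ∧ T.IsTree ∧ CongAtMost G T K) ↔
        IsHub G K ({r}ᶜ) r) ∧
    (stc G = K ↔ r ∈ hubSet G K ({r}ᶜ)) :=
  stc_eq_iff_root_hub_general K G hG r
end
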